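/- arXiv:2605.23854 — 2 statements merged into one kernel-verified Lean document; each statement's English description precedes it below -/
import Mathlib

section
/- For the stochastic block model SBM(n, m, p, q) with m blocks of size n/m and edge probabilities q_{ij} = q_l if i, j ∈ B_l and q_{ij} = p otherwise (with p < q_1 ≤ ⋯ ≤ q_m), the variation condition holds with constant s = 2m: for every l ∈ [m] and every i ∈ B_l, n·Σ_{j≠i} q_{ij}² ≤ 2m·(Σ_{j≠i} q_{ij})². -/
/-- The block of vertex `i` in a stochastic block model with `m` consecutive blocks of size `b`. -/
def blk (m b : ℕ) (i : Fin (m * b)) : Fin m :=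
  ⟨i.val / b, by
    have hb : 0 < b := by
      rcases Nat.eq_zero_or_pos b with h | h
      · subst h; exact absurd i.isLt (by simp)
      · exact h
    exact (Nat.div_lt_iff_lt_mul hb).mpr i.isLt⟩

/-- Edge sampling probabilities of the SBM: `q l` inside block `l`, `p` across blocks. -/
def sbmQ (m b : ℕ) (p : ℝ) (q : Fin m → ℝ) (i j : Fin (m * b)) : ℝ :=
  if blk m b i = blk m b j then q (blk m b i) else p
/-! For a vertex `i` in block `l`, write `a = q l`. The off-diagonal row of `i` consists of `b - 1`
entries `a` and `(m - 1) b` entries `p`, so with `x = (b - 1) a` and `y = (m - 1) b p` the claim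
reads `(b / (b - 1)) x² + y² / (m - 1) ≤ 2 (x + y)²`, which holds because `a, p ≥ 0`. After
clearing denominators, each coefficient of the difference is built from squares and products
`n (n - 1)` of consecutive integers, so it is nonnegative. -/

open Finset

theorem Int.cast_mul_cast_sub_one_nonneg (n : ℤ) : (0 : ℝ) ≤ n * (n - 1) := by
  exact_mod_cast show 0 ≤ n * (n - 1) by rcases le_or_gt n 0 with h | h <;> nlinarith

theorem block_variation_bound (m b : ℕ) {a p : ℝ} (ha : 0 ≤ a) (hp : 0 ≤ p) :
    (m * b : ℝ) * ((b - 1) * a ^ 2 + (m - 1) * b * p ^ 2) ≤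
      2 * m * ((b - 1) * a + (m - 1) * b * p) ^ 2 := by
  have hm := Int.cast_mul_cast_sub_one_nonneg m
  have hm₁ := Int.cast_mul_cast_sub_one_nonneg (m - 1)
  have hb := Int.cast_mul_cast_sub_one_nonneg b
  have hb₁ := Int.cast_mul_cast_sub_one_nonneg (b - 1)
  push_cast at hm hm₁ hb hb₁
  have hm₀ : (0 : ℝ) ≤ m := m.cast_nonneg
  -- `(m - 1) (2m - 3) = (m - 1) (m - 2) + (m - 1)²` is the coefficient of `m b² p²`.
  nlinarith [mul_nonneg (mul_nonneg hm hb) (mul_nonneg ha hp),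
    mul_nonneg hm₀ (mul_nonneg hb₁ (sq_nonneg a)),
    mul_nonneg hm₀ (mul_nonneg (add_nonneg hm₁ (sq_nonneg ((m : ℝ) - 1))) (sq_nonneg (b * p)))]

theorem blk_finProdFinEquiv (m b : ℕ) (x : Fin m × Fin b) : blk m b (finProdFinEquiv x) = x.1 :=
  congrArg Prod.fst (finProdFinEquiv.symm_apply_apply x)

theorem sum_comp_blk (m b : ℕ) (f : Fin m → ℝ) : ∑ j, f (blk m b j) = b * ∑ c, f c := by
  rw [← finProdFinEquiv.sum_comp, Fintype.sum_prod_type, mul_sum]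
  simp [blk_finProdFinEquiv]

theorem sum_ne_ite_blk (m b : ℕ) (i : Fin (m * b)) (A C : ℝ) :
    ∑ j ∈ univ.filter (fun j => j ≠ i), (if blk m b i = blk m b j then A else C) =
      (b - 1) * A + (m - 1) * b * C := by
  rw [filter_ne', sum_erase_eq_sub (mem_univ i),
    sum_comp_blk (f := fun c => if blk m b i = c then A else C)]
  simp only [sum_ite, filter_eq, filter_ne, mem_univ, ↓reduceIte, sum_const, card_singleton,
    one_smul, card_erase_of_mem, card_univ, Fintype.card_fin, nsmul_eq_mul,
    Nat.cast_pred (blk m b i).pos]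
  ring

/-- the variation condition holds with constant s = 2m for the SBM. -/
theorem stmt12 (m b : ℕ) (hm : 1 < m) (p : ℝ) (q : Fin m → ℝ)
    (hp : 0 ≤ p) (hmono : Monotone q)
    (hpq : p < q ⟨0, by omega⟩) :
    ∀ i : Fin (m * b),
      (m * b : ℝ) * ∑ j ∈ Finset.univ.filter (fun j => j ≠ i), (sbmQ m b p q i j) ^ 2 ≤
        2 * m * (∑ j ∈ Finset.univ.filter (fun j => j ≠ i), sbmQ m b p q i j) ^ 2 := by
  intro i
  have ha : 0 ≤ q (blk m b i) := hp.trans (hpq.le.trans (hmono (Nat.zero_le _)))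
  simp only [sbmQ, ite_pow, sum_ne_ite_blk]
  exact block_variation_bound m b ha hp
end

section
/- Let G be the graph on 5 vertices {1,2,3,4,5} with edge set {(1,2),(1,3),(1,4),(4,5)}, and let G' be G with the additional edge (2,3). Then the second smallest eigenvalue of the symmetric normalized Laplacian strictly decreases upon adding the edge: λ_{n−1}(L^{sym}(G')) < λ_{n−1}(L^{sym}(G)). (Numerically, λ_{n−1}(L^{sym}(G)) ≈ 0.423 and λ_{n−1}(L^{sym}(G')) ≈ 0.346.) -/
/-!
With `D` the degree matrix, `L^sym = D^{1/2} (I - D⁻¹A) D^{-1/2}`, so `L^sym` has the same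
characteristic polynomial as the random-walk Laplacian `I - D⁻¹A`, whose entries are rational.
For `G` this polynomial is `x (x - 1) (x - 2) (x² - 2x + 2/3)`, for `G'` it is
`x (x - 3/2) (x³ - 7/2 x² + 7/2 x - 5/6)`. Sign changes of the quadratic and cubic factors
separate the five roots of each polynomial, which puts the second smallest one below `2/5`
for `G'` and above `2/5` for `G`.
-/

/-- The second smallest eigenvalue of a real matrix with real spectrum: the entry at index 1
of the ascending sort of the (multiset of) roots of its characteristic polynomial. -/
noncomputable def sndSmallestEig {n : ℕ} (M : Matrix (Fin n) (Fin n) ℝ) : ℝ :=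
  (M.charpoly.roots.sort (· ≤ ·)).getD 1 0

/-- The symmetric normalized Laplacian L^sym = I − D^{−1/2} A D^{−1/2} of a graph with
adjacency matrix A. -/
noncomputable def lsym {n : ℕ} (A : Matrix (Fin n) (Fin n) ℝ) : Matrix (Fin n) (Fin n) ℝ :=
  1 - Matrix.diagonal (fun i => (Real.sqrt (∑ j, A i j))⁻¹) * A *
      Matrix.diagonal (fun i => (Real.sqrt (∑ j, A i j))⁻¹)

/-- Adjacency matrix of the 5-vertex graph with edges (1,2),(1,3),(1,4),(4,5). -/
noncomputable def adjG : Matrix (Fin 5) (Fin 5) ℝ :=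
  !![0, 1, 1, 1, 0;
     1, 0, 0, 0, 0;
     1, 0, 0, 0, 0;
     1, 0, 0, 0, 1;
     0, 0, 0, 1, 0]

/-- Adjacency matrix of the same graph with the extra edge (2,3). -/
noncomputable def adjG' : Matrix (Fin 5) (Fin 5) ℝ :=
  !![0, 1, 1, 1, 0;
     1, 0, 1, 0, 0;
     1, 1, 0, 0, 0;
     1, 0, 0, 0, 1;
     0, 0, 0, 1, 0]

open Matrix Polynomial Set

noncomputable def randomWalkLaplacian {n : ℕ} (A : Matrix (Fin n) (Fin n) ℝ) :
    Matrix (Fin n) (Fin n) ℝ :=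
  1 - diagonal (fun i => (∑ j, A i j)⁻¹) * A

lemma lsym_eq_conj_randomWalkLaplacian {n : ℕ} (A : Matrix (Fin n) (Fin n) ℝ)
    (hA : ∀ i, 0 < ∑ j, A i j) :
    lsym A = diagonal (fun i => √(∑ j, A i j)) * randomWalkLaplacian A *
      diagonal (fun i => (√(∑ j, A i j))⁻¹) := by
  have hs : ∀ i, √(∑ j, A i j) * (√(∑ j, A i j))⁻¹ = 1 :=
    fun i => mul_inv_cancel₀ (Real.sqrt_pos.2 (hA i)).ne'
  rw [lsym, randomWalkLaplacian, mul_sub, sub_mul, mul_one, diagonal_mul_diagonal, ← mul_assoc,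
    diagonal_mul_diagonal]
  simp only [hs, diagonal_one, ← div_eq_mul_inv, Real.sqrt_div_self', one_div]

lemma charpoly_lsym_eq_randomWalkLaplacian {n : ℕ} (A : Matrix (Fin n) (Fin n) ℝ)
    (hA : ∀ i, 0 < ∑ j, A i j) :
    (lsym A).charpoly = (randomWalkLaplacian A).charpoly := by
  rw [lsym_eq_conj_randomWalkLaplacian A hA, charpoly_mul_comm, ← mul_assoc,
    diagonal_mul_diagonal]
  simp only [inv_mul_cancel₀ (Real.sqrt_pos.2 (hA _)).ne', diagonal_one, one_mul]

lemma Polynomial.sort_roots_eq_of_isRoot {p : ℝ[X]} (hp : p ≠ 0) {l : List ℝ}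
    (hl : l.Pairwise (· < ·)) (hdeg : p.natDegree ≤ l.length)
    (hroots : ∀ x ∈ l, p.IsRoot x) :
    p.roots.sort (· ≤ ·) = l := by
  have hsub : (l : Multiset ℝ) ≤ p.roots :=
    (Multiset.le_iff_subset (Multiset.coe_nodup.2 (hl.imp ne_of_lt))).2
      fun x hx => (mem_roots hp).2 (hroots x hx)
  have hroots : p.roots = l :=
    (Multiset.eq_of_le_of_card_le hsub (by simpa using (card_roots' p).trans hdeg)).symm
  rw [hroots, Multiset.coe_sort]
  exact List.mergeSort_eq_self _ (hl.imp le_of_lt)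

lemma sndSmallestEig_eq_of_isRoot {n : ℕ} (M : Matrix (Fin n) (Fin n) ℝ) {l : List ℝ}
    (hl : l.IsChain (· < ·)) (hlen : n ≤ l.length) (hroots : ∀ x ∈ l, M.charpoly.IsRoot x) :
    sndSmallestEig M = l.getD 1 0 := by
  rw [sndSmallestEig, sort_roots_eq_of_isRoot M.charpoly_monic.ne_zero
    (List.isChain_iff_pairwise.1 hl) (by simpa using hlen) hroots]

lemma Polynomial.exists_isRoot_mem_Ioo {p : ℝ[X]} {a b : ℝ} (hab : a ≤ b)
    (h : p.eval a * p.eval b < 0) : ∃ x ∈ Ioo a b, p.IsRoot x := by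
  rcases mul_neg_iff.1 h with ⟨ha, hb⟩ | ⟨ha, hb⟩
  · exact intermediate_value_Ioo' hab p.continuous.continuousOn ⟨hb, ha⟩
  · exact intermediate_value_Ioo hab p.continuous.continuousOn ⟨ha, hb⟩

lemma sum_adjG_pos (i : Fin 5) : 0 < ∑ j, adjG i j := by
  fin_cases i <;> norm_num [adjG, Fin.sum_univ_succ]

lemma sum_adjG'_pos (i : Fin 5) : 0 < ∑ j, adjG' i j := by
  fin_cases i <;> norm_num [adjG', Fin.sum_univ_succ]

lemma randomWalkLaplacian_adjG : randomWalkLaplacian adjG =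
    !![1, -1/3, -1/3, -1/3, 0; -1, 1, 0, 0, 0; -1, 0, 1, 0, 0;
      -1/2, 0, 0, 1, -1/2; 0, 0, 0, -1, 1] := by
  ext i j
  fin_cases i <;> fin_cases j <;>
    norm_num [randomWalkLaplacian, adjG, Fin.sum_univ_succ, one_apply]

lemma randomWalkLaplacian_adjG' : randomWalkLaplacian adjG' =
    !![1, -1/3, -1/3, -1/3, 0; -1/2, 1, -1/2, 0, 0; -1/2, -1/2, 1, 0, 0;
      -1/2, 0, 0, 1, -1/2; 0, 0, 0, -1, 1] := by
  ext i j
  fin_cases i <;> fin_cases j <;>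
    norm_num [randomWalkLaplacian, adjG', Fin.sum_univ_succ, one_apply]

lemma eval_charpoly_lsym_adjG (x : ℝ) :
    (lsym adjG).charpoly.eval x = x * (x - 1) * (x - 2) * (x ^ 2 - 2 * x + 2 / 3) := by
  rw [charpoly_lsym_eq_randomWalkLaplacian adjG sum_adjG_pos, randomWalkLaplacian_adjG,
    eval_charpoly]
  simp [det_succ_row_zero, Fin.sum_univ_succ, Fin.succAbove]
  ring

lemma eval_charpoly_lsym_adjG' (x : ℝ) :
    (lsym adjG').charpoly.eval x =
      x * (x - 3 / 2) * (x ^ 3 - 7 / 2 * x ^ 2 + 7 / 2 * x - 5 / 6) := by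
  rw [charpoly_lsym_eq_randomWalkLaplacian adjG' sum_adjG'_pos, randomWalkLaplacian_adjG',
    eval_charpoly]
  simp [det_succ_row_zero, Fin.sum_univ_succ, Fin.succAbove]
  ring

lemma two_fifths_lt_sndSmallestEig_lsym_adjG : 2 / 5 < sndSmallestEig (lsym adjG) := by
  have hp := eval_charpoly_lsym_adjG
  obtain ⟨r, ⟨hr₁, hr₂⟩, hr⟩ := exists_isRoot_mem_Ioo (p := (lsym adjG).charpoly)
    (a := 2 / 5) (b := 1 / 2) (by norm_num) (by norm_num [hp])
  obtain ⟨s, ⟨hs₁, hs₂⟩, hs⟩ := exists_isRoot_mem_Ioo (p := (lsym adjG).charpoly)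
    (a := 3 / 2) (b := 8 / 5) (by norm_num) (by norm_num [hp])
  rw [sndSmallestEig_eq_of_isRoot _ (l := [0, r, 1, s, 2]) ?sorted (by simp) ?roots]
  · simpa using hr₁
  case sorted =>
    simp only [List.isChain_cons_cons, List.isChain_singleton, and_true]
    refine ⟨?_, ?_, ?_, ?_⟩ <;> linarith
  case roots =>
    simp only [List.mem_cons, List.not_mem_nil, forall_eq_or_imp]
    refine ⟨?_, hr, ?_, hs, ?_, ?_⟩ <;> norm_num [hp]

lemma sndSmallestEig_lsym_adjG'_lt_two_fifths : sndSmallestEig (lsym adjG') < 2 / 5 := by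
  have hp := eval_charpoly_lsym_adjG'
  obtain ⟨a, ⟨ha₁, ha₂⟩, ha⟩ := exists_isRoot_mem_Ioo (p := (lsym adjG').charpoly)
    (a := 1 / 10) (b := 2 / 5) (by norm_num) (by norm_num [hp])
  obtain ⟨b, ⟨hb₁, hb₂⟩, hb⟩ := exists_isRoot_mem_Ioo (p := (lsym adjG').charpoly)
    (a := 1) (b := 7 / 5) (by norm_num) (by norm_num [hp])
  obtain ⟨c, ⟨hc₁, hc₂⟩, hc⟩ := exists_isRoot_mem_Ioo (p := (lsym adjG').charpoly)
    (a := 8 / 5) (b := 2) (by norm_num) (by norm_num [hp])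
  rw [sndSmallestEig_eq_of_isRoot _ (l := [0, a, b, 3 / 2, c]) ?sorted (by simp) ?roots]
  · simpa using ha₂
  case sorted =>
    simp only [List.isChain_cons_cons, List.isChain_singleton, and_true]
    refine ⟨?_, ?_, ?_, ?_⟩ <;> linarith
  case roots =>
    simp only [List.mem_cons, List.not_mem_nil, forall_eq_or_imp]
    refine ⟨?_, ha, hb, ?_, hc, ?_⟩ <;> norm_num [hp]

/-- adding the edge (2,3) to the graph strictly decreases the second smallest
eigenvalue (spectral gap) of the symmetric normalized Laplacian. -/
theorem stmt18 : sndSmallestEig (lsym adjG') < sndSmallestEig (lsym adjG) :=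
  sndSmallestEig_lsym_adjG'_lt_two_fifths.trans two_fifths_lt_sndSmallestEig_lsym_adjG
end
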